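/- arXiv:1202.6011 — 2 statements merged into one kernel-verified Lean document; each statement's English description precedes it below -/
import Mathlib

section
/- Let λ, T, δ > 0 with δ ≤ T. Then λT − (λ(T−δ) − 1)·exp(−λδ) − 1 ≤ λ²Tδ. -/
/-- `λT − (λ(T−δ) − 1)·e^{−λδ} − 1 ≤ λ²Tδ`. -/
theorem stmt_6 (lam T δ : ℝ) (hlam : 0 < lam) (hT : 0 < T) (hδ : 0 < δ) (hδT : δ ≤ T) :
    lam * T - (lam * (T - δ) - 1) * Real.exp (-(lam * δ)) - 1 ≤ lam ^ 2 * T * δ := by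
  set x := lam * δ with hx
  have hx0 : 0 < x := mul_pos hlam hδ
  have h1 : 1 - x ≤ Real.exp (-x) := by
    have := Real.add_one_le_exp (-x); linarith
  have h2 : (x + 1) * Real.exp (-x) ≤ 1 := by
    have h := Real.add_one_le_exp x
    have hp : 0 < Real.exp (-x) := Real.exp_pos _
    have hmul : Real.exp x * Real.exp (-x) = 1 := by
      rw [← Real.exp_add]; simp
    nlinarith
  have hT' : 0 < lam * T := mul_pos hlam hT
  have hp : 0 < Real.exp (-x) := Real.exp_pos _
  have h3 : lam * T * (1 - Real.exp (-x)) ≤ lam * T * x := by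
    nlinarith
  have : lam ^ 2 * T * δ = lam * T * x := by ring
  nlinarith [mul_nonneg hlam.le hδ.le]
end

section
/- Let y = A_P β* + δ + ε where β* has support in index set P, and let β̂₀ minimize the non-negative LASSO restricted to support P. If for all z ≤ 1 (componentwise) the irrepresentability condition G_{P̄,P} G_{P,P}^{-1} z < (1−η₀)·1 holds for some 0 < η₀ < 1, then a sufficient condition for β̂₀ to be a global minimizer of the unrestricted non-negative LASSO is max_i (1/√N) H_iᵀ(δ + ε) < r·η₀, where H_i are the columns of H = A_{P̄}/√N − (A_P/√N)G_{P,P}^{-1}G_{P,P̄}. -/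
/-!
Write `res = y - A β̂₀` and `c = (1/N) Aᵀ res`. Around `β̂₀` the objective expands as
`F (β̂₀ + v) = F β̂₀ + ⟪r 1 - c, v⟫ + (1/2N) ‖A v‖²`, so `β̂₀` minimises `F` over `b ≥ 0` once the
linear term is nonnegative in every feasible direction. Along `P` this is the first-order
condition of the restricted problem; off `P` it follows from `c_k < r`. The columns of `H` are
orthogonal to those of `A_P`, and `res - (δ + ε)` lies in their span, so `Hᵀ res = Hᵀ (δ + ε)`;
unwinding `H` then gives
`c_{P̄} = G_{P̄,P} G_{P,P}⁻¹ (r z) + (1/√N) Hᵀ (δ + ε) < r (1 - η₀) + r η₀ = r`.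
-/

open Matrix

variable {N M : ℕ}

/-- Submatrix of columns indexed by `P`. -/
def colsIn (A : Matrix (Fin N) (Fin M) ℝ) (P : Finset (Fin M)) :
    Matrix (Fin N) {j : Fin M // j ∈ P} ℝ :=
  A.submatrix id (fun j => j.val)

/-- Submatrix of columns indexed by the complement of `P`. -/
def colsOut (A : Matrix (Fin N) (Fin M) ℝ) (P : Finset (Fin M)) :
    Matrix (Fin N) {j : Fin M // j ∉ P} ℝ :=
  A.submatrix id (fun j => j.val)

/-- Block Gram matrix `G_{P,P} = (1/N) A_Pᵀ A_P`. -/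
noncomputable def gramPP (A : Matrix (Fin N) (Fin M) ℝ) (P : Finset (Fin M)) :
    Matrix {j : Fin M // j ∈ P} {j : Fin M // j ∈ P} ℝ :=
  (N : ℝ)⁻¹ • ((colsIn A P)ᵀ * colsIn A P)

/-- Block Gram matrix `G_{P̄,P} = (1/N) A_{P̄}ᵀ A_P`. -/
noncomputable def gramCP (A : Matrix (Fin N) (Fin M) ℝ) (P : Finset (Fin M)) :
    Matrix {j : Fin M // j ∉ P} {j : Fin M // j ∈ P} ℝ :=
  (N : ℝ)⁻¹ • ((colsOut A P)ᵀ * colsIn A P)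

/-- `H = A_{P̄}/√N − (A_P/√N) G_{P,P}⁻¹ G_{P,P̄}`. -/
noncomputable def matH (A : Matrix (Fin N) (Fin M) ℝ) (P : Finset (Fin M)) :
    Matrix (Fin N) {j : Fin M // j ∉ P} ℝ :=
  (Real.sqrt N)⁻¹ •
    (colsOut A P - colsIn A P * (gramPP A P)⁻¹ * ((N : ℝ)⁻¹ • ((colsIn A P)ᵀ * colsOut A P)))

open Filter Topology

section LassoObjective

variable {m n : Type*} [Fintype m] [Fintype n]

noncomputable def lassoObjective (κ r : ℝ) (A : Matrix m n ℝ) (y : m → ℝ) (b : n → ℝ) : ℝ :=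
  κ * ∑ i, (y i - (A *ᵥ b) i) ^ 2 + r * ∑ j, b j

variable (κ r : ℝ) (A : Matrix m n ℝ) (y : m → ℝ)

theorem lassoObjective_add (b v : n → ℝ) :
    lassoObjective κ r A y (b + v) = lassoObjective κ r A y b
      + ∑ j, (r - 2 * κ * ((y - A *ᵥ b) ᵥ* A) j) * v j + κ * ∑ i, (A *ᵥ v) i ^ 2 := by
  have hcross : ∑ i, (y - A *ᵥ b) i * (A *ᵥ v) i = ∑ j, ((y - A *ᵥ b) ᵥ* A) j * v j :=
    dotProduct_mulVec (y - A *ᵥ b) A v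
  have hsq : ∑ i, (y i - (A *ᵥ (b + v)) i) ^ 2 = ∑ i, (y i - (A *ᵥ b) i) ^ 2
      - 2 * ∑ i, (y - A *ᵥ b) i * (A *ᵥ v) i + ∑ i, (A *ᵥ v) i ^ 2 := by
    rw [Finset.mul_sum, ← Finset.sum_sub_distrib, ← Finset.sum_add_distrib]
    refine Finset.sum_congr rfl fun i _ => ?_
    simp only [mulVec_add, Pi.add_apply, Pi.sub_apply]
    ring
  have hlin : ∑ j, (r - 2 * κ * ((y - A *ᵥ b) ᵥ* A) j) * v j
      = r * ∑ j, v j - 2 * κ * ∑ j, ((y - A *ᵥ b) ᵥ* A) j * v j := by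
    simp only [sub_mul, Finset.sum_sub_distrib, Finset.mul_sum, mul_assoc]
  simp only [lassoObjective, hsq, hcross, hlin, Pi.add_apply, Finset.sum_add_distrib]
  ring

theorem nonneg_of_forall_nonneg_add_mul {L Q : ℝ} (h : ∀ t : ℝ, 0 < t → t ≤ 1 → 0 ≤ L + t * Q) :
    0 ≤ L := by
  have hlim : Tendsto (fun t : ℝ => L + t * Q) (𝓝[>] 0) (𝓝 L) := by
    have hcont : Continuous (fun t : ℝ => L + t * Q) := by fun_prop
    simpa using (hcont.tendsto 0).mono_left nhdsWithin_le_nhds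
  refine ge_of_tendsto hlim ?_
  filter_upwards [Ioc_mem_nhdsGT one_pos] with t ht using h t ht.1 ht.2

theorem sum_mul_nonneg_of_le_lassoObjective_add_smul {b v : n → ℝ}
    (hmin : ∀ t : ℝ, 0 < t → t ≤ 1 →
      lassoObjective κ r A y b ≤ lassoObjective κ r A y (b + t • v)) :
    0 ≤ ∑ j, (r - 2 * κ * ((y - A *ᵥ b) ᵥ* A) j) * v j := by
  refine nonneg_of_forall_nonneg_add_mul (Q := κ * ∑ i, (A *ᵥ v) i ^ 2) fun t ht ht1 => ?_
  have hexp := lassoObjective_add κ r A y b (t • v)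
  simp only [mulVec_smul, Pi.smul_apply, smul_eq_mul, mul_pow, ← Finset.mul_sum,
    ← mul_assoc _ t, mul_comm _ t, mul_assoc t] at hexp
  have hstep : 0 ≤ t * (∑ j, (r - 2 * κ * ((y - A *ᵥ b) ᵥ* A) j) * v j
      + t * (κ * ∑ i, (A *ᵥ v) i ^ 2)) := by
    linarith [hmin t ht ht1]
  exact (mul_nonneg_iff_of_pos_left ht).mp hstep


theorem lassoObjective_le_of_le_on_support (P : Finset n) (hκ : 0 ≤ κ) {b : n → ℝ}
    (hb : 0 ≤ b) (hbP : ∀ j ∉ P, b j = 0)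
    (hmin : ∀ b', 0 ≤ b' → (∀ j ∉ P, b' j = 0) →
      lassoObjective κ r A y b ≤ lassoObjective κ r A y b')
    (hcorr : ∀ j ∉ P, 2 * κ * ((y - A *ᵥ b) ᵥ* A) j ≤ r) {b' : n → ℝ} (hb' : 0 ≤ b') :
    lassoObjective κ r A y b ≤ lassoObjective κ r A y b' := by
  classical
  set c : n → ℝ := fun j => r - 2 * κ * ((y - A *ᵥ b) ᵥ* A) j
  set v := b' - b
  set vP : n → ℝ := fun j => if j ∈ P then v j else 0
  have hin : 0 ≤ ∑ j, c j * vP j := by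
    refine sum_mul_nonneg_of_le_lassoObjective_add_smul κ r A y fun t ht ht1 => hmin _ ?_ ?_
    · intro j
      by_cases hj : j ∈ P
      · have : (b + t • vP) j = (1 - t) * b j + t * b' j := by
          simp only [vP, v, hj, if_true, Pi.add_apply, Pi.smul_apply, Pi.sub_apply, smul_eq_mul]
          ring
        rw [this]
        exact add_nonneg (mul_nonneg (sub_nonneg.mpr ht1) (hb j)) (mul_nonneg ht.le (hb' j))
      · simpa [vP, hj] using hb j
    · intro j hj
      simp [vP, hj, hbP j hj]
  have hout : 0 ≤ ∑ j, c j * (v j - vP j) := by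
    refine Finset.sum_nonneg fun j _ => ?_
    by_cases hj : j ∈ P
    · simp [vP, hj]
    · have hc : 0 ≤ c j := sub_nonneg.mpr (hcorr j hj)
      have hv : 0 ≤ v j := by simpa [v, hbP j hj] using hb' j
      simpa [vP, hj] using mul_nonneg hc hv
  have hsplit : ∑ j, c j * v j = ∑ j, c j * vP j + ∑ j, c j * (v j - vP j) := by
    rw [← Finset.sum_add_distrib]
    exact Finset.sum_congr rfl fun j _ => by ring
  have hquad : 0 ≤ κ * ∑ i, (A *ᵥ v) i ^ 2 := by positivity
  calc lassoObjective κ r A y b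
      ≤ lassoObjective κ r A y b + ∑ j, c j * v j + κ * ∑ i, (A *ᵥ v) i ^ 2 := by linarith
    _ = lassoObjective κ r A y b' := by
      rw [← lassoObjective_add, add_sub_cancel]

end LassoObjective

section GramBlocks

variable (A : Matrix (Fin N) (Fin M) ℝ) (P : Finset (Fin M))

theorem gramPP_transpose : (gramPP A P)ᵀ = gramPP A P := by
  simp only [gramPP, transpose_smul, transpose_mul, transpose_transpose]

theorem gramCP_transpose : (gramCP A P)ᵀ = (N : ℝ)⁻¹ • ((colsIn A P)ᵀ * colsOut A P) := by
  simp only [gramCP, transpose_smul, transpose_mul, transpose_transpose]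

theorem colsIn_mulVec {u : Fin M → ℝ} (hu : ∀ j ∉ P, u j = 0) :
    colsIn A P *ᵥ (fun j => u j) = A *ᵥ u := by
  ext i
  simp only [mulVec, dotProduct, colsIn, submatrix_apply, id_eq]
  rw [Finset.sum_coe_sort P (fun j => A i j * u j)]
  exact Finset.sum_subset (Finset.subset_univ P) fun j _ hj => by simp [hu j hj]

theorem colsIn_transpose_mul_matH (hG : IsUnit (gramPP A P).det) :
    (colsIn A P)ᵀ * matH A P = 0 := by
  have hproj : (colsIn A P)ᵀ * (colsIn A P * (gramPP A P)⁻¹ *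
      ((N : ℝ)⁻¹ • ((colsIn A P)ᵀ * colsOut A P))) = (colsIn A P)ᵀ * colsOut A P := by
    calc _ = gramPP A P * (gramPP A P)⁻¹ * ((colsIn A P)ᵀ * colsOut A P) := by
          simp only [gramPP, Matrix.mul_smul, Matrix.smul_mul, Matrix.mul_assoc]
      _ = _ := by rw [mul_nonsing_inv _ hG, Matrix.one_mul]
  rw [matH, Matrix.mul_smul, Matrix.mul_sub, hproj, sub_self, smul_zero]

theorem mulVec_vecMul_matH (hG : IsUnit (gramPP A P).det) {u : Fin M → ℝ}
    (hu : ∀ j ∉ P, u j = 0) : (A *ᵥ u) ᵥ* matH A P = 0 := by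
  rw [← colsIn_mulVec A P hu, ← vecMul_transpose, vecMul_vecMul,
    colsIn_transpose_mul_matH A P hG, vecMul_zero]

theorem inv_sqrt_smul_vecMul_matH (x : Fin N → ℝ) :
    (√N)⁻¹ • (x ᵥ* matH A P) = (N : ℝ)⁻¹ • (x ᵥ* colsOut A P)
      - (gramCP A P * (gramPP A P)⁻¹) *ᵥ ((N : ℝ)⁻¹ • (x ᵥ* colsIn A P)) := by
  have hinv : ((gramPP A P)⁻¹)ᵀ = (gramPP A P)⁻¹ := by
    rw [transpose_nonsing_inv, gramPP_transpose]
  have hsqrt : (√N)⁻¹ * (√N)⁻¹ = (N : ℝ)⁻¹ := by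
    rw [← mul_inv, Real.mul_self_sqrt (Nat.cast_nonneg N)]
  rw [← vecMul_transpose, transpose_mul, hinv, gramCP_transpose, matH, vecMul_smul, smul_smul,
    hsqrt, vecMul_sub, smul_sub, smul_vecMul, vecMul_vecMul, Matrix.mul_assoc]

theorem correlation_lt_of_irrepresentable (hG : IsUnit (gramPP A P).det) {u : Fin M → ℝ}
    (hu : ∀ j ∉ P, u j = 0) {x w : Fin N → ℝ} (hx : x = A *ᵥ u + w) {r η : ℝ} (hr : 0 < r)
    {z : {j // j ∈ P} → ℝ} (hKKT : (N : ℝ)⁻¹ • (x ᵥ* colsIn A P) = r • z)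
    (hirrep : ∀ k, ((gramCP A P * (gramPP A P)⁻¹) *ᵥ z) k < 1 - η)
    (hbound : ∀ k, (√N)⁻¹ * (w ᵥ* matH A P) k < r * η) (k : {j // j ∉ P}) :
    (N : ℝ)⁻¹ * (x ᵥ* A) k < r := by
  have hnoise : x ᵥ* matH A P = w ᵥ* matH A P := by
    rw [hx, add_vecMul, mulVec_vecMul_matH A P hG hu, zero_add]
  have hid := congrFun (inv_sqrt_smul_vecMul_matH A P x) k
  rw [hKKT, mulVec_smul, hnoise] at hid
  simp only [Pi.smul_apply, Pi.sub_apply, smul_eq_mul] at hid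
  have hirrep_k : r * ((gramCP A P * (gramPP A P)⁻¹) *ᵥ z) k < r * (1 - η) :=
    mul_lt_mul_of_pos_left (hirrep k) hr
  have hcols : (x ᵥ* colsOut A P) k = (x ᵥ* A) k := rfl
  rw [hcols] at hid
  linarith [hbound k]

end GramBlocks

theorem stmt_15_general (N M : ℕ) (A : Matrix (Fin N) (Fin M) ℝ)
    (P : Finset (Fin M)) (hG : IsUnit (gramPP A P).det)
    (βstar : Fin M → ℝ) (hβstar : ∀ j, j ∉ P → βstar j = 0)
    (d e y : Fin N → ℝ) (hy : y = fun i => A.mulVec βstar i + d i + e i)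
    (r η₀ : ℝ) (hr : 0 < r)
    (β₀ : Fin M → ℝ) (hβ₀pos : ∀ n, 0 ≤ β₀ n) (hβ₀supp : ∀ j, j ∉ P → β₀ j = 0)
    (hβ₀min : ∀ b : Fin M → ℝ, (∀ n, 0 ≤ b n) → (∀ j, j ∉ P → b j = 0) →
      (1 / (2 * N)) * ∑ i, (y i - A.mulVec β₀ i) ^ 2 + r * ∑ n, β₀ n ≤
        (1 / (2 * N)) * ∑ i, (y i - A.mulVec b i) ^ 2 + r * ∑ n, b n)
    (z : {j : Fin M // j ∈ P} → ℝ) (hz : ∀ j, z j ≤ 1)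
    (hKKT : ∀ j : {j : Fin M // j ∈ P},
      (N : ℝ)⁻¹ * ∑ i, A i j.val * (y i - A.mulVec β₀ i) = r * z j)
    (hirrep : ∀ w : {j : Fin M // j ∈ P} → ℝ, (∀ j, w j ≤ 1) →
      ∀ k : {j : Fin M // j ∉ P}, ((gramCP A P) * (gramPP A P)⁻¹).mulVec w k < 1 - η₀)
    (hbound : ∀ k : {j : Fin M // j ∉ P},
      (Real.sqrt N)⁻¹ * ∑ i, matH A P i k * (d i + e i) < r * η₀) :
    ∀ b : Fin M → ℝ, (∀ n, 0 ≤ b n) →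
      (1 / (2 * N)) * ∑ i, (y i - A.mulVec β₀ i) ^ 2 + r * ∑ n, β₀ n ≤
        (1 / (2 * N)) * ∑ i, (y i - A.mulVec b i) ^ 2 + r * ∑ n, b n := by
  intro b hb
  have hres : y - A *ᵥ β₀ = A *ᵥ (βstar - β₀) + (d + e) := by
    subst hy
    ext i
    simp only [Pi.sub_apply, Pi.add_apply, mulVec_sub]
    ring
  have hKKT' : (N : ℝ)⁻¹ • ((y - A *ᵥ β₀) ᵥ* colsIn A P) = r • z := by
    ext j
    simpa [vecMul, dotProduct, colsIn, mul_comm] using hKKT j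
  have hbound' : ∀ k, (√N)⁻¹ * ((d + e) ᵥ* matH A P) k < r * η₀ := by
    intro k
    simpa [vecMul, dotProduct, mul_comm] using hbound k
  have hcorr : ∀ j ∉ P, 2 * (1 / (2 * N)) * ((y - A *ᵥ β₀) ᵥ* A) j ≤ r := by
    intro j hj
    rw [show 2 * (1 / (2 * (N : ℝ))) = (N : ℝ)⁻¹ by ring]
    have hsupp : ∀ j ∉ P, (βstar - β₀) j = 0 := fun j hj => by
      simp [hβstar j hj, hβ₀supp j hj]
    exact (correlation_lt_of_irrepresentable A P hG hsupp hres hr hKKT' (hirrep z hz) hbound'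
      ⟨j, hj⟩).le
  exact lassoObjective_le_of_le_on_support _ r A y P (by positivity) hβ₀pos hβ₀supp hβ₀min hcorr hb

/-- under the irrepresentability condition, if the restricted (support in
`P`) non-negative LASSO minimizer `β̂₀` satisfies the correlated-residual bound
`max_i (1/√N) H_iᵀ(δ+ε) < rη₀`, then `β̂₀` is a global minimizer of the unrestricted
non-negative LASSO. -/
theorem stmt_15 (N M : ℕ) (hN : 0 < N) (A : Matrix (Fin N) (Fin M) ℝ)
    (P : Finset (Fin M)) (hG : IsUnit (gramPP A P).det)
    (βstar : Fin M → ℝ) (hβstar : ∀ j, j ∉ P → βstar j = 0)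
    (d e y : Fin N → ℝ) (hy : y = fun i => A.mulVec βstar i + d i + e i)
    (r η₀ : ℝ) (hr : 0 < r) (hη₀ : 0 < η₀) (hη₀' : η₀ < 1)
    (β₀ : Fin M → ℝ) (hβ₀pos : ∀ n, 0 ≤ β₀ n) (hβ₀supp : ∀ j, j ∉ P → β₀ j = 0)
    (hβ₀min : ∀ b : Fin M → ℝ, (∀ n, 0 ≤ b n) → (∀ j, j ∉ P → b j = 0) →
      (1 / (2 * N)) * ∑ i, (y i - A.mulVec β₀ i) ^ 2 + r * ∑ n, β₀ n ≤
        (1 / (2 * N)) * ∑ i, (y i - A.mulVec b i) ^ 2 + r * ∑ n, b n)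
    (z : {j : Fin M // j ∈ P} → ℝ) (hz : ∀ j, z j ≤ 1)
    (hKKT : ∀ j : {j : Fin M // j ∈ P},
      (N : ℝ)⁻¹ * ∑ i, A i j.val * (y i - A.mulVec β₀ i) = r * z j)
    (hirrep : ∀ w : {j : Fin M // j ∈ P} → ℝ, (∀ j, w j ≤ 1) →
      ∀ k : {j : Fin M // j ∉ P}, ((gramCP A P) * (gramPP A P)⁻¹).mulVec w k < 1 - η₀)
    (hbound : ∀ k : {j : Fin M // j ∉ P},
      (Real.sqrt N)⁻¹ * ∑ i, matH A P i k * (d i + e i) < r * η₀) :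
    ∀ b : Fin M → ℝ, (∀ n, 0 ≤ b n) →
      (1 / (2 * N)) * ∑ i, (y i - A.mulVec β₀ i) ^ 2 + r * ∑ n, β₀ n ≤
        (1 / (2 * N)) * ∑ i, (y i - A.mulVec b i) ^ 2 + r * ∑ n, b n :=
  stmt_15_general N M A P hG βstar hβstar d e y hy r η₀ hr β₀ hβ₀pos hβ₀supp hβ₀min z hz hKKT hirrep
    hbound
end
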